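/- arXiv:0904.1705 — 5 statements merged into one kernel-verified Lean document; each statement's English description precedes it below -/
import Mathlib

section
/- Let G be a finite bipartite graph with vertex bipartition (U, V) and let b be a positive integer. The family consisting of the blocks of the ordered b-partition of U together with the blocks of the ordered b-partition of V is a b-bounded proper vertex coloring of G with exactly ⌈|U|/b⌉ + ⌈|V|/b⌉ color classes, and ⌈|U|/b⌉ + ⌈|V|/b⌉ ≤ k* + 1, where k* is the minimum number of color classes over all b-bounded proper vertex colorings of G. -/
open Finset

/-- `⌈a / b⌉` for natural numbers. -/
def natCeilDiv (a b : ℕ) : ℕ := (a + b - 1) / b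

/-- `P` is the ordered `b`-partition of `S` (w.r.t. weights `w`): the blocks are pairwise
disjoint, cover `S`, each has at most `b` elements, earlier blocks consist of heavier
elements, and all blocks except possibly the last have exactly `b` elements. -/
def IsOrderedBPartition {β : Type*} [DecidableEq β] (w : β → ℕ) (b : ℕ) (S : Finset β)
    {k : ℕ} (P : Fin k → Finset β) : Prop :=
  (∀ i j : Fin k, i ≠ j → Disjoint (P i) (P j)) ∧
  Finset.univ.biUnion P = S ∧
  (∀ i, (P i).card ≤ b) ∧
  (∀ i j : Fin k, i < j → ∀ x ∈ P i, ∀ y ∈ P j, w y ≤ w x) ∧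
  (∀ i j : Fin k, i < j → (P i).card = b)

/-- A `b`-bounded proper vertex coloring of `G` with color classes `C i`:
a partition of the vertex set into independent sets, each of cardinality at most `b`. -/
def IsBddProperVC {α : Type*} (G : SimpleGraph α) (b : ℕ)
    {ι : Type*} (C : ι → Finset α) : Prop :=
  (∀ v : α, ∃! i, v ∈ C i) ∧
  (∀ i, ∀ u ∈ C i, ∀ v ∈ C i, ¬ G.Adj u v) ∧
  (∀ i, (C i).card ≤ b)

/-- A proper edge coloring of `G` with color classes `C i`: a partition of the edge set
into matchings. -/
def IsProperEC {α : Type*} [Fintype α] [DecidableEq α] (G : SimpleGraph α) [DecidableRel G.Adj]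
    {ι : Type*} (C : ι → Finset (Sym2 α)) : Prop :=
  (∀ e ∈ G.edgeFinset, ∃! i, e ∈ C i) ∧
  (∀ i, C i ⊆ G.edgeFinset) ∧
  (∀ i, ∀ e ∈ C i, ∀ f ∈ C i, e ≠ f → ¬ ∃ v, v ∈ e ∧ v ∈ f)

/-- A `b`-bounded proper edge coloring: a proper edge coloring each of whose classes has
cardinality at most `b`. -/
def IsBddProperEC {α : Type*} [Fintype α] [DecidableEq α] (G : SimpleGraph α) [DecidableRel G.Adj]
    (b : ℕ) {ι : Type*} (C : ι → Finset (Sym2 α)) : Prop :=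
  IsProperEC G C ∧ ∀ i, (C i).card ≤ b

/-- A nice `b`-bounded edge coloring: a sequence `C 0, …, C (k-1)` of (nonempty) pairwise
disjoint matchings of `G` covering `E(G)`, each of cardinality at most `b`, such that each
`C i` has cardinality exactly `b` or is a maximal matching of the subgraph of `G` with edge
set `E(G) \ (C 0 ∪ … ∪ C (i-1))`. -/
def IsNiceBddEC {α : Type*} [Fintype α] [DecidableEq α] (G : SimpleGraph α) [DecidableRel G.Adj]
    (b : ℕ) {k : ℕ} (C : Fin k → Finset (Sym2 α)) : Prop :=
  IsBddProperEC G b C ∧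
  (∀ i, (C i).Nonempty) ∧
  (∀ i : Fin k, (C i).card = b ∨
    ∀ e ∈ G.edgeFinset, (∀ j, j ≤ i → e ∉ C j) → ∃ f ∈ C i, ∃ v, v ∈ e ∧ v ∈ f)

/-- A greedy (first-fit) `b`-bounded edge coloring of `G`: a `b`-bounded proper edge coloring
`C` together with an enumeration `e` of the edges in nonincreasing order of weight and a color
assignment `c` with `e j ∈ C (c j)`, such that each edge is placed in the first color that is
not full and contains no adjacent edge at the moment of placement. -/
def IsGreedyEC {α : Type*} [Fintype α] [DecidableEq α] (G : SimpleGraph α) [DecidableRel G.Adj]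
    (w : Sym2 α → ℕ) (b : ℕ) {k m : ℕ} (C : Fin k → Finset (Sym2 α))
    (e : Fin m → Sym2 α) (c : Fin m → Fin k) : Prop :=
  IsBddProperEC G b C ∧
  Function.Injective e ∧
  (∀ f, f ∈ G.edgeFinset ↔ ∃ j, e j = f) ∧
  (∀ j j' : Fin m, j ≤ j' → w (e j') ≤ w (e j)) ∧
  (∀ j, e j ∈ C (c j)) ∧
  (∀ j : Fin m, ∀ i : Fin k, i < c j →
    ((Finset.univ.filter fun l : Fin m => l < j ∧ c l = i)).card = b ∨
      ∃ l : Fin m, l < j ∧ c l = i ∧ e l ≠ e j ∧ ∃ v, v ∈ e l ∧ v ∈ e j)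


namespace IsOrderedBPartition

variable {β : Type*} [DecidableEq β] {w : β → ℕ} {b : ℕ} {S : Finset β} {k : ℕ}
  {P : Fin k → Finset β}

theorem subset (hP : IsOrderedBPartition w b S P) (i : Fin k) : P i ⊆ S :=
  hP.2.1 ▸ subset_biUnion_of_mem P (mem_univ i)

theorem card_le (hP : IsOrderedBPartition w b S P) (i : Fin k) : (P i).card ≤ b :=
  hP.2.2.1 i

theorem existsUnique_mem (hP : IsOrderedBPartition w b S P) {x : β} (hx : x ∈ S) :
    ∃! i, x ∈ P i := by
  obtain ⟨i, -, hi⟩ := mem_biUnion.1 (hP.2.1 ▸ hx)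
  refine ⟨i, hi, fun j hj => ?_⟩
  by_contra hji
  exact disjoint_left.1 (hP.1 j i hji) hj hi

end IsOrderedBPartition

section FinAppend

variable {β : Type*} {p : β → Prop} {m n : ℕ} {f : Fin m → β} {g : Fin n → β}

theorem existsUnique_append_left (hf : ∃! i, p (f i)) (hg : ∀ j, ¬ p (g j)) :
    ∃! i, p (Fin.append f g i) := by
  obtain ⟨i, hi, huniq⟩ := hf
  refine ⟨Fin.castAdd n i, by simpa using hi, fun j hj => ?_⟩
  induction j using Fin.addCases with
  | left j => rw [huniq j (by simpa using hj)]
  | right j => exact absurd (by simpa using hj) (hg j)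

theorem existsUnique_append_right (hf : ∀ i, ¬ p (f i)) (hg : ∃! j, p (g j)) :
    ∃! i, p (Fin.append f g i) := by
  obtain ⟨j, hj, huniq⟩ := hg
  refine ⟨Fin.natAdd m j, by simpa using hj, fun i hi => ?_⟩
  induction i using Fin.addCases with
  | left i => exact absurd (by simpa using hi) (hf i)
  | right i => rw [huniq i (by simpa using hi)]

end FinAppend

theorem not_adj_of_mem_same_side {α : Type*} {G : SimpleGraph α} {U V : Finset α}
    (hdisj : Disjoint U V) (hbip : ∀ u v : α, G.Adj u v → (u ∈ U ∧ v ∈ V) ∨ (u ∈ V ∧ v ∈ U))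
    {u v : α} (hu : u ∈ U) (hv : v ∈ U) : ¬ G.Adj u v := by
  intro huv
  rcases hbip u v huv with ⟨-, hvV⟩ | ⟨huV, -⟩
  · exact disjoint_left.1 hdisj hv hvV
  · exact disjoint_left.1 hdisj hu huV

theorem isBddProperVC_append_of_bipartite {α : Type*} [Fintype α] [DecidableEq α]
    {G : SimpleGraph α} {U V : Finset α} (hdisj : Disjoint U V) (hcover : U ∪ V = univ)
    (hbip : ∀ u v : α, G.Adj u v → (u ∈ U ∧ v ∈ V) ∨ (u ∈ V ∧ v ∈ U))
    {wU wV : α → ℕ} {b m n : ℕ} {PU : Fin m → Finset α} {PV : Fin n → Finset α}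
    (hPU : IsOrderedBPartition wU b U PU) (hPV : IsOrderedBPartition wV b V PV) :
    IsBddProperVC G b (Fin.append PU PV) := by
  have hbip' : ∀ u v : α, G.Adj u v → (u ∈ V ∧ v ∈ U) ∨ (u ∈ U ∧ v ∈ V) :=
    fun u v huv => (hbip u v huv).symm
  refine ⟨fun v => ?_, fun i => ?_, fun i => ?_⟩
  · rcases mem_union.1 (hcover ▸ mem_univ v) with hvU | hvV
    · exact existsUnique_append_left (p := (v ∈ ·)) (hPU.existsUnique_mem hvU)
        fun j hj => disjoint_left.1 hdisj hvU (hPV.subset j hj)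
    · exact existsUnique_append_right (p := (v ∈ ·))
        (fun i hi => disjoint_left.1 hdisj (hPU.subset i hi) hvV) (hPV.existsUnique_mem hvV)
  · induction i using Fin.addCases with
    | left i =>
      simpa using fun u hu v hv =>
        not_adj_of_mem_same_side hdisj hbip (hPU.subset i hu) (hPU.subset i hv)
    | right j =>
      simpa using fun u hu v hv =>
        not_adj_of_mem_same_side hdisj.symm hbip' (hPV.subset j hu) (hPV.subset j hv)
  · induction i using Fin.addCases with
    | left i => simpa using hPU.card_le i
    | right j => simpa using hPV.card_le j

theorem IsBddProperVC.card_le_mul {α ι : Type*} [Fintype α] [DecidableEq α] [Fintype ι]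
    {G : SimpleGraph α} {b : ℕ} {C : ι → Finset α} (hC : IsBddProperVC G b C) :
    Fintype.card α ≤ Fintype.card ι * b := by
  have hcover : (univ : Finset α) ⊆ univ.biUnion C := fun v _ =>
    mem_biUnion.2 ((hC.1 v).exists.imp fun i hi => ⟨mem_univ i, hi⟩)
  calc Fintype.card α = (univ : Finset α).card := card_univ.symm
    _ ≤ (univ.biUnion C).card := card_le_card hcover
    _ ≤ ∑ i, (C i).card := card_biUnion_le
    _ ≤ ∑ _i : ι, b := sum_le_sum fun i _ => hC.2.2 i
    _ = Fintype.card ι * b := by simp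

theorem natCeilDiv_add_natCeilDiv_le {a c b k : ℕ} (h : a + c ≤ k * b) :
    natCeilDiv a b + natCeilDiv c b ≤ k + 1 := by
  rcases Nat.eq_zero_or_pos b with rfl | hb
  · simp [natCeilDiv]
  -- each ceiling overshoots by less than `b`, so together by less than `2b`
  refine Nat.lt_succ_iff.1 (Nat.lt_of_mul_lt_mul_right (a := b) ?_)
  calc (natCeilDiv a b + natCeilDiv c b) * b
      ≤ (a + b - 1) + (c + b - 1) :=
        add_mul _ _ b ▸ add_le_add (Nat.div_mul_le_self _ _) (Nat.div_mul_le_self _ _)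
    _ < (k + 2) * b := by rw [add_mul]; omega

theorem stmt_0_general {α : Type*} [Fintype α] [DecidableEq α] (G : SimpleGraph α)
    (U V : Finset α) (hdisj : Disjoint U V) (hcover : U ∪ V = Finset.univ)
    (hbip : ∀ u v : α, G.Adj u v → (u ∈ U ∧ v ∈ V) ∨ (u ∈ V ∧ v ∈ U))
    (b : ℕ)
    (PU : Fin (natCeilDiv U.card b) → Finset α)
    (PV : Fin (natCeilDiv V.card b) → Finset α)
    (hPU : IsOrderedBPartition (fun _ => 0) b U PU)
    (hPV : IsOrderedBPartition (fun _ => 0) b V PV) :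
    IsBddProperVC G b (Fin.append PU PV) ∧
    ∀ (k : ℕ) (C : Fin k → Finset α), IsBddProperVC G b C →
      natCeilDiv U.card b + natCeilDiv V.card b ≤ k + 1 := by
  refine ⟨isBddProperVC_append_of_bipartite hdisj hcover hbip hPU hPV, fun k C hC => ?_⟩
  have hUV : U.card + V.card = Fintype.card α := by
    rw [← card_union_of_disjoint hdisj, hcover, card_univ]
  exact natCeilDiv_add_natCeilDiv_le (hUV ▸ by simpa using hC.card_le_mul)

/-- The blocks of the ordered `b`-partitions of the two sides `U`, `V` of a bipartite graph
form a `b`-bounded proper vertex coloring with exactly `⌈|U|/b⌉ + ⌈|V|/b⌉` color classes,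
and this number is at most `k* + 1` for the minimum number `k*` of classes of a `b`-bounded
proper vertex coloring. -/
theorem stmt_0 {α : Type*} [Fintype α] [DecidableEq α] (G : SimpleGraph α)
    (U V : Finset α) (hdisj : Disjoint U V) (hcover : U ∪ V = Finset.univ)
    (hbip : ∀ u v : α, G.Adj u v → (u ∈ U ∧ v ∈ V) ∨ (u ∈ V ∧ v ∈ U))
    (b : ℕ) (hb : 0 < b)
    (PU : Fin (natCeilDiv U.card b) → Finset α)
    (PV : Fin (natCeilDiv V.card b) → Finset α)
    (hPU : IsOrderedBPartition (fun _ => 0) b U PU)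
    (hPV : IsOrderedBPartition (fun _ => 0) b V PV) :
    IsBddProperVC G b (Fin.append PU PV) ∧
    ∀ (k : ℕ) (C : Fin k → Finset α), IsBddProperVC G b C →
      natCeilDiv U.card b + natCeilDiv V.card b ≤ k + 1 :=
  stmt_0_general G U V hdisj hcover hbip b PU PV hPU hPV
end

section
/- Let G be a finite bipartite graph with vertex bipartition (U, V), let w : V(G) → ℕ be a vertex weight function, and let b be a positive integer. Let W be the total weight of the b-bounded proper vertex coloring of G whose color classes are the blocks of the ordered b-partitions of U and of V. Then for every b-bounded proper vertex coloring of G whose class weights, listed in nonincreasing order, are w₁* ≥ w₂* ≥ … ≥ w_{k*}*, one has W ≤ 2·w₁* + w₂* + … + w_{k*}*. In particular, W ≤ 2·OPT, where OPT is the minimum total weight of a b-bounded proper vertex coloring of G. -/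
/-!
A sum of natural weights is the sum over thresholds `t` of the number of weights exceeding `t`,
so it suffices to compare, threshold by threshold, how many blocks and how many colour classes
are heavier than `t`. If block `j` is the last block of an ordered `b`-partition heavier than `t`,
the `j` blocks before it are full of elements heavier than `t`; so at most `j + 1` blocks but at
least `j * b + 1` elements exceed `t`. The classes heavier than `t` cover those elements at most
`b` at a time, so adding the two sides of the bipartition shows that at most one block more than
classes exceeds `t`, and no block exceeds the largest class weight. Summing over `t` gives
`W ≤ w₁* + ∑ wᵢ*`.
-/

open Finset

namespace Finset

theorem sum_eq_sum_range_card_filter_lt {ι : Type*} (s : Finset ι) (f : ι → ℕ) {N : ℕ}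
    (hf : ∀ i ∈ s, f i ≤ N) :
    ∑ i ∈ s, f i = ∑ t ∈ range N, #{i ∈ s | t < f i} := by
  simp only [card_filter]
  rw [sum_comm]
  refine sum_congr rfl fun i hi => ?_
  rw [← card_filter, ← card_range (f i)]
  congr 1
  ext t
  simpa using fun ht : t < f i => ht.trans_le (hf i hi)

end Finset

section

variable {α : Type*} [DecidableEq α] {w : α → ℕ} {b : ℕ}

theorem IsOrderedBPartition.mul_card_filter_lt_sup_lt {S : Finset α} {p : ℕ}
    {P : Fin p → Finset α} (hP : IsOrderedBPartition w b S P) (hb : 0 < b) (t : ℕ) :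
    b * #{j | t < (P j).sup w} < #{x ∈ S | t < w x} + b := by
  obtain ⟨hdisj, hcover, -, horder, hfull⟩ := hP
  set R : Finset (Fin p) := {j | t < (P j).sup w}
  rcases R.eq_empty_or_nonempty with hR | hR
  · simp [hR, hb]
  set j := R.max' hR
  obtain ⟨x, hx, htx⟩ := Finset.lt_sup_iff.mp (mem_filter.mp (R.max'_mem hR)).2
  have hRj : #R ≤ j + 1 := by
    simpa using card_le_card fun i hi => mem_Iic.mpr (R.le_max' i hi)
  have hx_notMem : x ∉ (Iio j).biUnion P := by
    simp only [mem_biUnion, mem_Iio, not_exists, not_and]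
    exact fun i hij hxi => disjoint_left.mp (hdisj i j hij.ne) hxi hx
  have hcard : #(insert x ((Iio j).biUnion P)) = j * b + 1 := by
    rw [card_insert_of_notMem hx_notMem,
      card_biUnion fun i _ i' _ hii' => hdisj i i' hii',
      sum_congr rfl fun i hi => hfull i j (mem_Iio.mp hi), sum_const, Fin.card_Iio, smul_eq_mul]
  have hsub : insert x ((Iio j).biUnion P) ⊆ {x ∈ S | t < w x} := by
    intro y hy
    rw [mem_filter, ← hcover, mem_biUnion]
    rcases mem_insert.mp hy with rfl | hy
    · exact ⟨⟨j, mem_univ _, hx⟩, htx⟩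
    · obtain ⟨i, hij, hyi⟩ := mem_biUnion.mp hy
      exact ⟨⟨i, mem_univ _, hyi⟩, htx.trans_le (horder i j (mem_Iio.mp hij) y hyi x hx)⟩
  have := card_le_card hsub
  nlinarith

theorem card_filter_lt_le_mul_card_filter_lt_sup {ι : Type*} [Fintype ι] {X : Finset α}
    {C : ι → Finset α} (hC : ∀ x ∈ X, ∃ i, x ∈ C i) (hCb : ∀ i, #(C i) ≤ b)
    (t : ℕ) :
    #{x ∈ X | t < w x} ≤ b * #{i | t < (C i).sup w} := by
  have hsub : {x ∈ X | t < w x} ⊆ ({i | t < (C i).sup w} : Finset ι).biUnion C := by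
    intro x hx
    obtain ⟨hxX, htx⟩ := mem_filter.mp hx
    obtain ⟨i, hxi⟩ := hC x hxX
    have hti : t < (C i).sup w := Finset.lt_sup_iff.mpr ⟨x, hxi, htx⟩
    exact mem_biUnion.mpr ⟨i, mem_filter.mpr ⟨mem_univ _, hti⟩, hxi⟩
  rw [mul_comm]
  exact (card_le_card hsub).trans (card_biUnion_le_card_mul _ _ _ fun i _ => hCb i)

theorem card_filter_lt_sup_add_card_filter_lt_sup_le {ι : Type*} [Fintype ι] {U V : Finset α}
    (hUV : Disjoint U V) (hb : 0 < b) {p q : ℕ}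
    {PU : Fin p → Finset α} {PV : Fin q → Finset α}
    (hPU : IsOrderedBPartition w b U PU) (hPV : IsOrderedBPartition w b V PV)
    {C : ι → Finset α} (hC : ∀ x ∈ U ∪ V, ∃ i, x ∈ C i) (hCb : ∀ i, #(C i) ≤ b)
    (t : ℕ) :
    #{j | t < (PU j).sup w} + #{j | t < (PV j).sup w} ≤ #{i | t < (C i).sup w} + 1 := by
  have hU := hPU.mul_card_filter_lt_sup_lt hb t
  have hV := hPV.mul_card_filter_lt_sup_lt hb t
  have hsplit : #{x ∈ U | t < w x} + #{x ∈ V | t < w x} = #{x ∈ U ∪ V | t < w x} := by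
    rw [filter_union, card_union_of_disjoint (disjoint_filter_filter hUV)]
  have hC := card_filter_lt_le_mul_card_filter_lt_sup (w := w) hC hCb t
  have : b * (#{j | t < (PU j).sup w} + #{j | t < (PV j).sup w}) <
      b * (#{i | t < (C i).sup w} + 2) := by
    linarith
  exact Nat.lt_succ_iff.mp (Nat.lt_of_mul_lt_mul_left this)

theorem IsOrderedBPartition.sup_le {S : Finset α} {p : ℕ} {P : Fin p → Finset α}
    (hP : IsOrderedBPartition w b S P) {M : ℕ} (hM : ∀ x ∈ S, w x ≤ M) (j : Fin p) :
    (P j).sup w ≤ M :=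
  Finset.sup_le fun x hx => hM x (hP.2.1 ▸ mem_biUnion.mpr ⟨j, mem_univ _, hx⟩)

theorem sum_sup_add_sum_sup_le {ι : Type*} [Fintype ι] {U V : Finset α}
    (hUV : Disjoint U V) (hb : 0 < b) {p q : ℕ}
    {PU : Fin p → Finset α} {PV : Fin q → Finset α}
    (hPU : IsOrderedBPartition w b U PU) (hPV : IsOrderedBPartition w b V PV)
    {C : ι → Finset α} (hC : ∀ x ∈ U ∪ V, ∃ i, x ∈ C i) (hCb : ∀ i, #(C i) ≤ b) :
    ∑ j, (PU j).sup w + ∑ j, (PV j).sup w ≤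
      ∑ i, (C i).sup w + univ.sup fun i => (C i).sup w := by
  set M := univ.sup fun i => (C i).sup w
  have hM : ∀ x ∈ U ∪ V, w x ≤ M := fun x hx => by
    obtain ⟨i, hxi⟩ := hC x hx
    exact (le_sup hxi).trans (le_sup (f := fun i => (C i).sup w) (mem_univ i))
  have hPUM := hPU.sup_le fun x hx => hM x (mem_union_left V hx)
  have hPVM := hPV.sup_le fun x hx => hM x (mem_union_right U hx)
  rw [sum_eq_sum_range_card_filter_lt _ _ fun j _ => hPUM j,
    sum_eq_sum_range_card_filter_lt _ _ fun j _ => hPVM j,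
    sum_eq_sum_range_card_filter_lt _ _ fun i _ => le_sup (f := fun i => (C i).sup w) (mem_univ i),
    ← sum_add_distrib]
  calc _ ≤ ∑ t ∈ range M, (#{i | t < (C i).sup w} + 1) := sum_le_sum fun t _ =>
        card_filter_lt_sup_add_card_filter_lt_sup_le hUV hb hPU hPV hC hCb t
    _ = _ := by rw [sum_add_distrib, sum_const, card_range, smul_eq_mul, mul_one]

end

theorem stmt_1_general {α : Type*} [DecidableEq α] (G : SimpleGraph α)
    (w : α → ℕ)
    (U V : Finset α) (hdisj : Disjoint U V)
    (b : ℕ) (hb : 0 < b)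
    (PU : Fin (natCeilDiv U.card b) → Finset α)
    (PV : Fin (natCeilDiv V.card b) → Finset α)
    (hPU : IsOrderedBPartition w b U PU)
    (hPV : IsOrderedBPartition w b V PV) :
    (∀ (k : ℕ) (C : Fin k → Finset α) (ws : Fin k → ℕ), IsBddProperVC G b C →
      (∃ σ : Equiv.Perm (Fin k), ∀ i, ws i = (C (σ i)).sup w) →
      (∀ i j : Fin k, i ≤ j → ws j ≤ ws i) →
      ∑ i, (Fin.append PU PV i).sup w ≤ (∑ i, ws i) + Finset.univ.sup ws) ∧
    (∀ (k : ℕ) (C : Fin k → Finset α), IsBddProperVC G b C →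
      ∑ i, (Fin.append PU PV i).sup w ≤ 2 * ∑ i, (C i).sup w) := by
  simp only [Fin.sum_univ_add, Fin.append_left, Fin.append_right]
  refine ⟨fun k C ws hC ⟨σ, hσ⟩ _ => ?_, fun k C hC => ?_⟩
  · obtain rfl : ws = fun i => (C (σ i)).sup w := funext hσ
    have hCσ : ∀ x ∈ U ∪ V, ∃ i, x ∈ C (σ i) := fun x _ => by
      obtain ⟨i, hi⟩ := (hC.1 x).exists
      exact ⟨σ.symm i, by simpa using hi⟩
    exact sum_sup_add_sum_sup_le hdisj hb hPU hPV hCσ fun i => hC.2.2 (σ i)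
  · calc _ ≤ ∑ i, (C i).sup w + univ.sup fun i => (C i).sup w :=
          sum_sup_add_sum_sup_le hdisj hb hPU hPV (fun x _ => (hC.1 x).exists) hC.2.2
      _ ≤ 2 * ∑ i, (C i).sup w := by
          rw [two_mul]
          exact add_le_add_right (Finset.sup_le fun i _ => single_le_sum (by simp) (mem_univ i)) _

/-- The total weight `W` of the coloring formed by the blocks of the ordered `b`-partitions
of the two sides `U`, `V` of a bipartite graph satisfies, for every `b`-bounded proper vertex
coloring with class weights `ws` listed in nonincreasing order,
`W ≤ 2·ws₁ + ws₂ + … + ws_k` (equivalently `≤ (∑ ws) + max ws`); in particular `W ≤ 2·OPT`. -/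
theorem stmt_1 {α : Type*} [Fintype α] [DecidableEq α] (G : SimpleGraph α)
    (w : α → ℕ)
    (U V : Finset α) (hdisj : Disjoint U V) (hcover : U ∪ V = Finset.univ)
    (hbip : ∀ u v : α, G.Adj u v → (u ∈ U ∧ v ∈ V) ∨ (u ∈ V ∧ v ∈ U))
    (b : ℕ) (hb : 0 < b)
    (PU : Fin (natCeilDiv U.card b) → Finset α)
    (PV : Fin (natCeilDiv V.card b) → Finset α)
    (hPU : IsOrderedBPartition w b U PU)
    (hPV : IsOrderedBPartition w b V PV) :
    (∀ (k : ℕ) (C : Fin k → Finset α) (ws : Fin k → ℕ), IsBddProperVC G b C →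
      (∃ σ : Equiv.Perm (Fin k), ∀ i, ws i = (C (σ i)).sup w) →
      (∀ i j : Fin k, i ≤ j → ws j ≤ ws i) →
      ∑ i, (Fin.append PU PV i).sup w ≤ (∑ i, ws i) + Finset.univ.sup ws) ∧
    (∀ (k : ℕ) (C : Fin k → Finset α), IsBddProperVC G b C →
      ∑ i, (Fin.append PU PV i).sup w ≤ 2 * ∑ i, (C i).sup w) :=
  stmt_1_general G w U V hdisj b hb PU PV hPU hPV
end

section
/- Let G be a finite bipartite graph with vertex bipartition (U, V) and let b be a positive integer with |U| + |V| ≥ 2b + 1. Then ⌈|U|/b⌉ + ⌈|V|/b⌉ ≤ (4/3)·k*, where k* is the minimum number of color classes over all b-bounded proper vertex colorings of G. -/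
open Finset

/-! A `b`-bounded coloring with `k` classes covers at most `k * b` vertices, so
`|U| + |V| ≤ k * b`. Rounding `|U| / b` and `|V| / b` up separately costs at most one class
more than rounding `(|U| + |V|) / b` up, so `⌈|U|/b⌉ + ⌈|V|/b⌉ ≤ k + 1`; and `|U| + |V| > 2b`
forces `k ≥ 3`, where `k + 1 ≤ 4k/3`. -/

theorem natCeilDiv_mul_le (a b : ℕ) : natCeilDiv a b * b ≤ a + b - 1 :=
  Nat.div_mul_le_self _ _

theorem card_le_mul_of_isBddProperVC {α ι : Type*} [Fintype ι] {G : SimpleGraph α} {b : ℕ}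
    {C : ι → Finset α} (hC : IsBddProperVC G b C) (s : Finset α) :
    s.card ≤ Fintype.card ι * b := by
  classical
  obtain ⟨hcover, -, hcard⟩ := hC
  have hsub : s ⊆ univ.biUnion C := fun v _ ↦ by
    obtain ⟨i, hi, -⟩ := hcover v
    exact mem_biUnion.2 ⟨i, mem_univ i, hi⟩
  calc s.card ≤ (univ.biUnion C).card := card_le_card hsub
    _ ≤ ∑ i, (C i).card := card_biUnion_le
    _ ≤ ∑ _i : ι, b := sum_le_sum fun i _ ↦ hcard i
    _ = Fintype.card ι * b := by simp

theorem stmt_2_general {α : Type*} (G : SimpleGraph α)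
    (U V : Finset α) (hdisj : Disjoint U V)
    (b : ℕ)
    (hsize : 2 * b + 1 ≤ U.card + V.card) :
    ∀ (k : ℕ) (C : Fin k → Finset α), IsBddProperVC G b C →
      ((natCeilDiv U.card b + natCeilDiv V.card b : ℕ) : ℚ) ≤ 4 / 3 * (k : ℚ) := by
  classical
  intro k C hC
  have hkb : U.card + V.card ≤ k * b := by
    simpa [card_union_of_disjoint hdisj] using card_le_mul_of_isBddProperVC hC (U ∪ V)
  have hk : 3 ≤ k := by
    by_contra! hk
    have : k * b ≤ 2 * b := Nat.mul_le_mul_right b (by omega)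
    omega
  have hceil : ((natCeilDiv U.card b + natCeilDiv V.card b : ℕ) : ℚ) ≤ k + 1 := by
    exact_mod_cast natCeilDiv_add_natCeilDiv_le hkb
  have hkq : (3 : ℚ) ≤ k := by exact_mod_cast hk
  linarith

/-- If `|U| + |V| ≥ 2b + 1` in a bipartite graph with bipartition `(U, V)`, then
`⌈|U|/b⌉ + ⌈|V|/b⌉ ≤ (4/3)·k*`, where `k*` is the minimum number of classes of a
`b`-bounded proper vertex coloring (hence the bound holds against every such coloring). -/
theorem stmt_2 {α : Type*} [Fintype α] [DecidableEq α] (G : SimpleGraph α)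
    (U V : Finset α) (hdisj : Disjoint U V) (hcover : U ∪ V = Finset.univ)
    (hbip : ∀ u v : α, G.Adj u v → (u ∈ U ∧ v ∈ V) ∨ (u ∈ V ∧ v ∈ U))
    (b : ℕ) (hb : 0 < b)
    (hsize : 2 * b + 1 ≤ U.card + V.card) :
    ∀ (k : ℕ) (C : Fin k → Finset α), IsBddProperVC G b C →
      ((natCeilDiv U.card b + natCeilDiv V.card b : ℕ) : ℚ) ≤ 4 / 3 * (k : ℚ) :=
  stmt_2_general G U V hdisj b hsize
end

section
/- Let G be a finite simple graph with at least one edge and let b be a positive integer. If a nice b-bounded edge coloring of G has k color classes and some b-bounded proper edge coloring of G has k' color classes, then k ≤ (3 − 2/√(2b))·k'. -/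
open Finset

/-!
Call a class of the nice colouring small if it has fewer than `b` edges; each small class is a
maximal matching of the graph left over when it is chosen. Fix an edge `uv` of the last small
class. Every small class meets `u` or `v`, so the small classes split into `x` meeting only `u`,
`y` meeting only `v` and `z ≥ 1` meeting both, and `x + z, y + z ≤ Δ(G) ≤ k'`. A class meeting
`u` but not `v` covers the other end `ω` of the edge `vω` of each later class meeting `v`, as
`vω` was still uncoloured when it was chosen; so it has at least
`(1 + #later classes meeting only v) / 2` edges; summing, the small classes hold at least
`(xy + x + y)/2 + z` edges. The full classes hold `b` edges each and there are at most `b k'` edges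
in all; maximising the resulting bilinear bound over `x, y ∈ [0, k' - z]` gives the constant
`3 - 2 / √(2b)`.
-/

lemma affine_nonneg_of_endpoints {a c x w : ℝ} (hx : 0 ≤ x) (hxw : x ≤ w)
    (h0 : 0 ≤ c) (hw : 0 ≤ a * w + c) : 0 ≤ a * x + c := by
  rcases le_total 0 a with ha | ha <;> nlinarith

lemma bilinear_nonneg_of_corners {p q s d x y w : ℝ} (hx : 0 ≤ x) (hxw : x ≤ w)
    (hy : 0 ≤ y) (hyw : y ≤ w) (h00 : 0 ≤ d) (h10 : 0 ≤ q * w + d) (h01 : 0 ≤ s * w + d)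
    (h11 : 0 ≤ p * w * w + q * w + s * w + d) : 0 ≤ p * x * y + q * x + s * y + d := by
  have hx0 : 0 ≤ s * y + d := affine_nonneg_of_endpoints hy hyw h00 h01
  have hxw' : 0 ≤ (p * y + q) * w + (s * y + d) := by
    have := affine_nonneg_of_endpoints (a := p * w + s) hy hyw h10 (by linarith)
    linear_combination this
  linear_combination affine_nonneg_of_endpoints hx hxw hx0 hxw'

lemma add_le_three_sub_two_div_sqrt_mul {b t x y z K D : ℝ} (hb : 1 ≤ b) (hz : 1 ≤ z)
    (hx : 0 ≤ x) (hy : 0 ≤ y) (hxK : x + z ≤ K) (hyK : y + z ≤ K)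
    (hD : x * y + x + y + 2 * z ≤ 2 * D) (hbud : t * b + D ≤ K * b) :
    t + (x + y + z) ≤ (3 - 2 / √(2 * b)) * K := by
  set r := √(2 * b)
  have hr2 : r ^ 2 = 2 * b := Real.sq_sqrt (by linarith)
  have hr1 : 1 ≤ r := Real.one_le_sqrt.mpr (by linarith)
  obtain ⟨w, rfl⟩ : ∃ w, K = w + z := ⟨K - z, by ring⟩
  -- the left side is bilinear in `x, y ∈ [0, w]`, so it suffices to check the four corners
  have hcorners : 0 ≤ 1 * x * y + (1 - r ^ 2) * x + (1 - r ^ 2) * y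
      + (2 * z - r ^ 2 * z + 2 * (w + z) * r ^ 2 - 2 * (w + z) * r) := by
    have hw : 0 ≤ w := by linarith
    apply bilinear_nonneg_of_corners (w := w) hx (by linarith) hy (by linarith)
    · nlinarith [mul_nonneg hw (mul_nonneg (by linarith : (0:ℝ) ≤ r) (sub_nonneg.2 hr1)),
        mul_nonneg (by linarith : (0:ℝ) ≤ z) (sq_nonneg (r - 1))]
    · nlinarith [mul_nonneg hw (sq_nonneg (r - 1))]
    · nlinarith [mul_nonneg hw (sq_nonneg (r - 1))]
    · nlinarith [sq_nonneg (w - r + 1), mul_nonneg (sub_nonneg.2 hz) (sq_nonneg (r - 1))]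
  have htb : t * r ^ 2 = 2 * (t * b) := by rw [hr2]; ring
  have hKb : (w + z) * r ^ 2 = 2 * ((w + z) * b) := by rw [hr2]; ring
  have key : (t + (x + y + z)) * r ^ 2 ≤ 3 * (w + z) * r ^ 2 - 2 * (w + z) * r := by
    nlinarith
  have hr0 : 0 < r := by linarith
  rw [show (3 - 2 / r) * (w + z) = (3 * (w + z) * r ^ 2 - 2 * (w + z) * r) / r ^ 2 by
    field_simp]
  exact (le_div_iff₀ (by positivity)).mpr key

lemma sum_card_filter_lt_add_sum_card_filter_lt {β : Type*} [LinearOrder β] {X Y : Finset β}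
    (h : Disjoint X Y) :
    ∑ x ∈ X, #{y ∈ Y | x < y} + ∑ y ∈ Y, #{x ∈ X | y < x} = #X * #Y := by
  simp_rw [card_filter]
  rw [sum_comm (s := Y), ← sum_add_distrib, ← smul_eq_mul, ← sum_const]
  refine sum_congr rfl fun x hx => ?_
  rw [← sum_add_distrib, card_eq_sum_ones]
  refine sum_congr rfl fun y hy => ?_
  rcases lt_trichotomy x y with hxy | rfl | hxy
  · simp [hxy, hxy.not_gt]
  · exact absurd hy (disjoint_left.1 h hx)
  · simp [hxy, hxy.not_gt]

lemma mul_add_add_le_two_mul_sum {β : Type*} [LinearOrder β] {X Y : Finset β} (h : Disjoint X Y)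
    (c : β → ℕ) (hX : ∀ x ∈ X, #{y ∈ Y | x < y} + 1 ≤ 2 * c x)
    (hY : ∀ y ∈ Y, #{x ∈ X | y < x} + 1 ≤ 2 * c y) :
    #X * #Y + #X + #Y ≤ 2 * (∑ x ∈ X, c x + ∑ y ∈ Y, c y) := by
  have hXsum := sum_le_sum hX
  have hYsum := sum_le_sum hY
  simp only [sum_add_distrib, sum_const, smul_eq_mul, mul_one, ← mul_sum] at hXsum hYsum
  have := sum_card_filter_lt_add_sum_card_filter_lt h
  omega

lemma sum_union_eq_sum_sdiff_add_sum_sdiff_add_sum_inter {β : Type*} [DecidableEq β]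
    (U V : Finset β) (f : β → ℕ) :
    ∑ i ∈ U ∪ V, f i = ∑ i ∈ U \ V, f i + ∑ i ∈ V \ U, f i + ∑ i ∈ U ∩ V, f i := by
  have hU := sum_inter_add_sum_sdiff U V f
  have hV := sum_inter_add_sum_sdiff V U f
  have := sum_union_inter (s₁ := U) (s₂ := V) (f := f)
  rw [inter_comm V U] at hV
  omega

lemma card_filter_eq_mul_add_sum_filter_ne {ι : Type*} (s : Finset ι) (f : ι → ℕ) (b : ℕ) :
    #{i ∈ s | f i = b} * b + ∑ i ∈ s with f i ≠ b, f i = ∑ i ∈ s, f i := by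
  rw [← sum_filter_add_sum_filter_not s (fun i => f i = b), sum_congr rfl fun i hi =>
    (mem_filter.1 hi).2, sum_const, smul_eq_mul]

def coveredVerts {α : Type*} [DecidableEq α] (M : Finset (Sym2 α)) : Finset α :=
  M.biUnion Sym2.toFinset

@[simp]
lemma mem_coveredVerts {α : Type*} [DecidableEq α] {M : Finset (Sym2 α)} {a : α} :
    a ∈ coveredVerts M ↔ ∃ g ∈ M, a ∈ g := by
  simp [coveredVerts]

lemma card_coveredVerts_le {α : Type*} [DecidableEq α] (M : Finset (Sym2 α)) :
    #(coveredVerts M) ≤ 2 * #M := by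
  rw [mul_comm]
  refine card_biUnion_le_card_mul _ _ _ fun g _ => ?_
  rw [Sym2.card_toFinset]
  split <;> omega

section EdgeColoring

variable {α : Type*} [Fintype α] [DecidableEq α] {G : SimpleGraph α} [DecidableRel G.Adj]

section
variable {ι : Type*} {C : ι → Finset (Sym2 α)}

lemma IsProperEC.eq_of_mem (hC : IsProperEC G C) {g : Sym2 α} {i i' : ι} (hi : g ∈ C i)
    (hi' : g ∈ C i') : i = i' :=
  (hC.1 g (hC.2.1 i hi)).unique hi hi'

lemma IsProperEC.sum_card [Fintype ι] (hC : IsProperEC G C) :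
    ∑ i, #(C i) = #G.edgeFinset := by
  classical
  rw [← card_biUnion fun i _ j _ hij => disjoint_left.2 fun g hi hj => hij (hC.eq_of_mem hi hj)]
  congr 1
  ext g
  simp only [mem_biUnion, mem_univ, true_and]
  exact ⟨fun ⟨i, hi⟩ => hC.2.1 i hi, fun hg => (hC.1 g hg).exists⟩

lemma IsBddProperEC.card_edgeFinset_le [Fintype ι] {b : ℕ} (hC : IsBddProperEC G b C) :
    #G.edgeFinset ≤ Fintype.card ι * b := by
  rw [← hC.1.sum_card]
  simpa using sum_le_sum fun i (_ : i ∈ univ) => hC.2 i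

lemma IsProperEC.degree_le_card [Fintype ι] (hC : IsProperEC G C) (a : α) :
    G.degree a ≤ Fintype.card ι := by
  rw [← G.card_incidenceFinset_eq_degree, G.incidenceFinset_eq_filter, ← card_univ]
  refine card_le_card_of_forall_subsingleton (fun g i => g ∈ C i) (fun g hg => ?_) ?_
  · obtain ⟨i, hi, -⟩ := hC.1 g (mem_filter.1 hg).1
    exact ⟨i, mem_univ i, hi⟩
  · intro i _ g ⟨hg, hgi⟩ g' ⟨hg', hg'i⟩
    by_contra hne
    exact hC.2.2 i g hgi g' hg'i hne ⟨a, (mem_filter.1 hg).2, (mem_filter.1 hg').2⟩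

lemma IsProperEC.card_filter_mem_coveredVerts_le_degree (hC : IsProperEC G C) (s : Finset ι)
    (a : α) : #{i ∈ s | a ∈ coveredVerts (C i)} ≤ G.degree a := by
  rw [← G.card_incidenceFinset_eq_degree, G.incidenceFinset_eq_filter]
  refine card_le_card_of_forall_subsingleton (fun i g => g ∈ C i) (fun i hi => ?_) ?_
  · obtain ⟨g, hg, hag⟩ := mem_coveredVerts.1 (mem_filter.1 hi).2
    exact ⟨g, mem_filter.2 ⟨hC.2.1 i hg, hag⟩, hg⟩
  · intro g _ i hi i' hi'
    exact hC.eq_of_mem hi.2 hi'.2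

end

variable (G) in
def IsMaximalInRemainder {k : ℕ} (C : Fin k → Finset (Sym2 α)) (j : Fin k) : Prop :=
  ∀ e ∈ G.edgeFinset, (∀ i, i ≤ j → e ∉ C i) → ∃ f ∈ C j, ∃ v, v ∈ e ∧ v ∈ f

variable {k : ℕ} {C : Fin k → Finset (Sym2 α)}

lemma IsMaximalInRemainder.mem_or_mem (hC : IsProperEC G C) {j l : Fin k}
    (hj : IsMaximalInRemainder G C j) (hjl : j ≤ l) {u v : α} (he : s(u, v) ∈ C l) :
    u ∈ coveredVerts (C j) ∨ v ∈ coveredVerts (C j) := by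
  rcases hjl.lt_or_eq with hjl | rfl
  · obtain ⟨f, hf, w, hwe, hwf⟩ :=
      hj _ (hC.2.1 l he) fun i hij hei => (hC.eq_of_mem hei he ▸ hij).not_gt hjl
    rcases Sym2.mem_iff.1 hwe with rfl | rfl
    · exact .inl (mem_coveredVerts.2 ⟨f, hf, hwf⟩)
    · exact .inr (mem_coveredVerts.2 ⟨f, hf, hwf⟩)
  · exact .inl (mem_coveredVerts.2 ⟨_, he, Sym2.mem_mk_left u v⟩)

lemma IsMaximalInRemainder.card_filter_lt_le (hC : IsProperEC G C) {j : Fin k}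
    (hj : IsMaximalInRemainder G C j) {c : α} (hc : c ∉ coveredVerts (C j)) :
    #{l | j < l ∧ c ∈ coveredVerts (C l)} ≤ 2 * #(C j) := by
  refine (card_le_card_of_forall_subsingleton (fun l ω => s(c, ω) ∈ C l) (fun l hl => ?_)
    fun ω _ l hl l' hl' => hC.eq_of_mem hl.2 hl'.2).trans (card_coveredVerts_le _)
  obtain ⟨hjl, hcl⟩ := (mem_filter.1 hl).2
  obtain ⟨g, hg, hcg⟩ := mem_coveredVerts.1 hcl
  rw [← Sym2.other_spec' hcg] at hg
  exact ⟨_, (hj.mem_or_mem hC hjl.le hg).resolve_left hc, hg⟩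

lemma IsMaximalInRemainder.card_filter_lt_add_one_le (hC : IsProperEC G C) {j m : Fin k}
    (hj : IsMaximalInRemainder G C j) (hjm : j ≤ m) {v : α} (hvj : v ∉ coveredVerts (C j))
    (hvm : v ∈ coveredVerts (C m)) {Y : Finset (Fin k)} (hY : ∀ l ∈ Y, v ∈ coveredVerts (C l))
    (hmY : m ∉ Y) : #{l ∈ Y | j < l} + 1 ≤ 2 * #(C j) := by
  have hjm' : j < m := hjm.lt_of_ne (by rintro rfl; exact hvj hvm)
  calc #{l ∈ Y | j < l} + 1 = #(insert m {l ∈ Y | j < l}) :=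
        (card_insert_of_notMem fun h => hmY (mem_filter.1 h).1).symm
    _ ≤ #{l | j < l ∧ v ∈ coveredVerts (C l)} := card_le_card <| insert_subset
        (mem_filter.2 ⟨mem_univ _, hjm', hvm⟩)
        fun l hl => mem_filter.2 ⟨mem_univ _, (mem_filter.1 hl).2, hY l (mem_filter.1 hl).1⟩
    _ ≤ 2 * #(C j) := hj.card_filter_lt_le hC hvj

lemma exists_card_eq_add_add_of_isMaximalInRemainder (hC : IsProperEC G C)
    (hne : ∀ i, (C i).Nonempty) {S : Finset (Fin k)} (hS : S.Nonempty)
    (hmax : ∀ j ∈ S, IsMaximalInRemainder G C j) :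
    ∃ x y z : ℕ, 1 ≤ z ∧ x + z ≤ G.maxDegree ∧ y + z ≤ G.maxDegree ∧
      x * y + x + y + 2 * z ≤ 2 * ∑ j ∈ S, #(C j) ∧ #S = x + y + z := by
  set m := S.max' hS
  have hm : m ∈ S := S.max'_mem hS
  obtain ⟨e, he⟩ := hne m
  induction e using Sym2.ind with | _ u v => ?_
  have hu : u ∈ coveredVerts (C m) := mem_coveredVerts.2 ⟨_, he, Sym2.mem_mk_left u v⟩
  have hv : v ∈ coveredVerts (C m) := mem_coveredVerts.2 ⟨_, he, Sym2.mem_mk_right u v⟩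
  set U := {j ∈ S | u ∈ coveredVerts (C j)}
  set V := {j ∈ S | v ∈ coveredVerts (C j)}
  have hUV : S = U ∪ V :=
    subset_antisymm
      (fun j hj => by simpa [U, V, hj] using (hmax j hj).mem_or_mem hC (S.le_max' j hj) he)
      (union_subset (filter_subset _ _) (filter_subset _ _))
  have hbound : ∀ {a b : α}, a ∈ coveredVerts (C m) → b ∈ coveredVerts (C m) →
      ∀ j ∈ {j ∈ S | a ∈ coveredVerts (C j)} \ {j ∈ S | b ∈ coveredVerts (C j)},
        #{l ∈ {j ∈ S | b ∈ coveredVerts (C j)} \ {j ∈ S | a ∈ coveredVerts (C j)} | j < l} + 1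
          ≤ 2 * #(C j) := by
    intro a b ha hb j hj
    obtain ⟨⟨hjS, -⟩, hjb⟩ := (mem_sdiff.1 hj).imp_left mem_filter.1
    exact (hmax j hjS).card_filter_lt_add_one_le hC (S.le_max' j hjS)
      (fun h => hjb (mem_filter.2 ⟨hjS, h⟩)) hb
      (fun l hl => (mem_filter.1 (mem_sdiff.1 hl).1).2)
      (fun h => (mem_sdiff.1 h).2 (mem_filter.2 ⟨hm, ha⟩))
  have hXY : #(U \ V) * #(V \ U) + #(U \ V) + #(V \ U) ≤
      2 * (∑ j ∈ U \ V, #(C j) + ∑ j ∈ V \ U, #(C j)) :=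
    mul_add_add_le_two_mul_sum disjoint_sdiff_sdiff _ (hbound hu hv) (hbound hv hu)
  have hZ : #(U ∩ V) ≤ ∑ j ∈ U ∩ V, #(C j) := by
    simpa using card_nsmul_le_sum (U ∩ V) (fun j => #(C j)) 1 fun j _ => (hne j).card_pos
  refine ⟨#(U \ V), #(V \ U), #(U ∩ V),
    card_pos.2 ⟨m, mem_inter.2 ⟨mem_filter.2 ⟨hm, hu⟩, mem_filter.2 ⟨hm, hv⟩⟩⟩, ?_, ?_, ?_, ?_⟩
  · rw [card_sdiff_add_card_inter]
    exact (hC.card_filter_mem_coveredVerts_le_degree S u).trans (G.degree_le_maxDegree u)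
  · rw [inter_comm, card_sdiff_add_card_inter]
    exact (hC.card_filter_mem_coveredVerts_le_degree S v).trans (G.degree_le_maxDegree v)
  · rw [hUV, sum_union_eq_sum_sdiff_add_sum_sdiff_add_sum_inter]
    omega
  · simpa [hUV] using sum_union_eq_sum_sdiff_add_sum_sdiff_add_sum_inter U V (fun _ => 1)

end EdgeColoring

lemma one_le_three_sub_two_div_sqrt (b : ℕ) : 1 ≤ 3 - 2 / √(2 * b) := by
  rcases Nat.eq_zero_or_pos b with rfl | hb
  · simp
  · have : 1 ≤ √(2 * b) := Real.one_le_sqrt.2 (by norm_cast; omega)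
    have : 2 / √(2 * b) ≤ 2 := div_le_self zero_le_two this
    linarith

theorem stmt_7_general {α : Type*} [Fintype α] [DecidableEq α] (G : SimpleGraph α) [DecidableRel G.Adj]
    (b : ℕ)
    (k k' : ℕ) (C : Fin k → Finset (Sym2 α)) (C' : Fin k' → Finset (Sym2 α))
    (hC : IsNiceBddEC G b C) (hC' : IsBddProperEC G b C') :
    (k : ℝ) ≤ (3 - 2 / Real.sqrt (2 * b)) * (k' : ℝ) := by
  obtain ⟨hCb, hne, hmax⟩ := hC
  have hbpos : ∀ i, 0 < b := fun i => (hne i).card_pos.trans_le (hCb.2 i)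
  have hsplit : #{i | #(C i) = b} * b + ∑ i with #(C i) ≠ b, #(C i) ≤ k' * b := by
    rw [card_filter_eq_mul_add_sum_filter_ne, hCb.1.sum_card]
    simpa using hC'.card_edgeFinset_le
  have hk : k = #{i | #(C i) = b} + #{i | #(C i) ≠ b} := by
    rw [card_filter_add_card_filter_not, card_univ, Fintype.card_fin]
  rcases eq_empty_or_nonempty {i | #(C i) ≠ b} with hS | hS
  · have hkk' : k ≤ k' := by
      rcases Nat.eq_zero_or_pos k with hk0 | hk0
      · omega
      · simp only [hS, sum_empty, card_empty, add_zero] at hsplit hk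
        exact Nat.le_of_mul_le_mul_right (hk ▸ hsplit) (hbpos ⟨0, hk0⟩)
    exact (Nat.cast_le.2 hkk').trans
      (le_mul_of_one_le_left (Nat.cast_nonneg _) (one_le_three_sub_two_div_sqrt b))
  · obtain ⟨x, y, z, hz, hxz, hyz, hxy, hcard⟩ := exists_card_eq_add_add_of_isMaximalInRemainder
      hCb.1 hne hS fun j hj => (hmax j).resolve_left (mem_filter.1 hj).2
    have hΔ : G.maxDegree ≤ k' := G.maxDegree_le_of_forall_degree_le k' fun a => by
      simpa using hC'.1.degree_le_card a
    obtain ⟨i, -⟩ := hS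
    rw [hk, hcard]
    push_cast
    exact add_le_three_sub_two_div_sqrt_mul (D := (∑ i with #(C i) ≠ b, #(C i) : ℕ))
      (by exact_mod_cast hbpos i) (by exact_mod_cast hz)
      (Nat.cast_nonneg _) (Nat.cast_nonneg _) (by exact_mod_cast hxz.trans hΔ)
      (by exact_mod_cast hyz.trans hΔ) (by exact_mod_cast hxy) (by exact_mod_cast hsplit)

/-- If a graph `G` with at least one edge has a nice `b`-bounded edge coloring with `k`
classes and some `b`-bounded proper edge coloring with `k'` classes, then
`k ≤ (3 − 2/√(2b))·k'`. -/
theorem stmt_7 {α : Type*} [Fintype α] [DecidableEq α] (G : SimpleGraph α) [DecidableRel G.Adj]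
    (hE : G.edgeFinset.Nonempty) (b : ℕ) (hb : 0 < b)
    (k k' : ℕ) (C : Fin k → Finset (Sym2 α)) (C' : Fin k' → Finset (Sym2 α))
    (hC : IsNiceBddEC G b C) (hC' : IsBddProperEC G b C') :
    (k : ℝ) ≤ (3 - 2 / Real.sqrt (2 * b)) * (k' : ℝ) :=
  stmt_7_general G b k k' C C' hC hC'
end

section
/- Let T be a finite tree with at least one edge, with edge weight function w : E(T) → ℕ and maximum degree Δ. Then there exists a partition of E(T) into matchings M₁, …, M_Δ such that for every i ∈ {1, …, Δ} and every e ∈ M_i there exist at least i − 1 pairwise adjacent edges of T, each of weight at least w(e). -/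
open Finset

/-!
Root the tree at a vertex `r` and orient every edge away from `r`. At each vertex `u`, rank the
edges to the children of `u` by nonincreasing weight (ties broken by a fixed enumeration of the
vertices), and give the child edge with `k` heavier siblings the `k`-th smallest color (counting
from `0`) other than the color of the edge joining `u` to its parent. Such an edge gets color `k`
or `k + 1`, so it and its `k` heavier siblings form a star at `u` of at least as many edges as its
color. Since a non-root vertex has a neighbor that is not a child, every color is smaller than `Δ`.
-/

namespace Nat

def succAbove (p i : ℕ) : ℕ := if i < p then i else i + 1

lemma succAbove_of_lt {p i : ℕ} (h : i < p) : succAbove p i = i := if_pos h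

lemma succAbove_le_succ (p i : ℕ) : succAbove p i ≤ i + 1 := by
  unfold succAbove; split <;> omega

lemma succAbove_ne (p i : ℕ) : succAbove p i ≠ p := by
  unfold succAbove; split <;> omega

lemma succAbove_right_injective (p : ℕ) : Function.Injective (succAbove p) := by
  intro i j h
  unfold succAbove at h
  split at h <;> split at h <;> omega

end Nat

namespace Finset

variable {β γ : Type*} [LinearOrder γ] (s : Finset β) (f : β → γ)

def rankAbove (x : β) : ℕ := #{y ∈ s | f x < f y}

lemma rankAbove_lt_card {x : β} (hx : x ∈ s) : s.rankAbove f x < #s :=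
  card_lt_card (filter_ssubset.2 ⟨x, hx, lt_irrefl _⟩)

lemma rankAbove_lt_rankAbove {x y : β} (hy : y ∈ s) (h : f x < f y) :
    s.rankAbove f y < s.rankAbove f x := by
  have hsub : {z ∈ s | f y < f z} ⊆ {z ∈ s | f x < f z} :=
    fun z hz => by
      rw [mem_filter] at hz ⊢
      exact ⟨hz.1, h.trans hz.2⟩
  refine card_lt_card ((ssubset_iff_of_subset hsub).2 ⟨y, ?_, ?_⟩)
  · exact mem_filter.2 ⟨hy, h⟩
  · simp

lemma rankAbove_injOn (hf : Set.InjOn f s) : Set.InjOn (s.rankAbove f) s := by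
  intro x hx y hy hxy
  by_contra hne
  rcases lt_or_gt_of_ne ((hf.ne_iff hx hy).2 hne) with h | h
  · exact (rankAbove_lt_rankAbove s f hy h).ne' hxy
  · exact (rankAbove_lt_rankAbove s f hx h).ne hxy

end Finset

namespace SimpleGraph

variable {α : Type*} {G : SimpleGraph α}

lemma IsTree.exists_adj_dist_add_one (hG : G.IsTree) (r : α) {v : α} (hv : v ≠ r) :
    ∃ u, G.Adj u v ∧ G.dist r u + 1 = G.dist r v := by
  obtain ⟨p, hp⟩ := (hG.connected v r).exists_walk_length_eq_dist
  have hnil : ¬ p.Nil := Walk.not_nil_of_ne hv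
  refine ⟨p.snd, (p.adj_snd hnil).symm, ?_⟩
  have htail := p.length_tail_add_one hnil
  have hle := G.dist_le p.tail
  have hstep := hG.dist_eq_dist_add_one_of_adj r (p.adj_snd hnil)
  rw [dist_comm] at hp hle
  omega

lemma IsTree.mem_support_of_adj_of_dist_add_one (hG : G.IsTree) {r u v : α} {p : G.Walk r v}
    (hp : p.IsPath) (huv : G.Adj u v) (hd : G.dist r u + 1 = G.dist r v) : u ∈ p.support := by
  classical
  obtain ⟨q, hq, hlen⟩ := hG.connected.exists_path_of_dist r u
  refine hG.isAcyclic.mem_support_of_ne_mem_support_of_adj_of_isPath hp hq huv.symm fun hv => ?_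
  have := G.dist_le (q.takeUntil v hv)
  have := q.length_takeUntil_le_length hv
  omega

lemma IsTree.eq_of_adj_of_dist_add_one (hG : G.IsTree) {r a b v : α} (ha : G.Adj a v)
    (hb : G.Adj b v) (hda : G.dist r a + 1 = G.dist r v) (hdb : G.dist r b + 1 = G.dist r v) :
    a = b := by
  obtain ⟨p, hp, -⟩ := hG.connected.exists_path_of_dist r v
  have hpa := hG.isAcyclic.eq_penultimate_of_adj_end hp ha.symm
    (hG.mem_support_of_adj_of_dist_add_one hp ha hda)
  have hpb := hG.isAcyclic.eq_penultimate_of_adj_end hp hb.symm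
    (hG.mem_support_of_adj_of_dist_add_one hp hb hdb)
  exact hpa.trans hpb.symm

variable [Fintype α] [DecidableRel G.Adj] {r : α} (w : Sym2 α → ℕ)

variable (G r) in
noncomputable def children (u : α) : Finset α :=
  {x ∈ G.neighborFinset u | G.dist r u + 1 = G.dist r x}

lemma mem_children {u x : α} :
    x ∈ G.children r u ↔ G.Adj u x ∧ G.dist r u + 1 = G.dist r x := by
  simp [children]

noncomputable def childKey (u x : α) : ℕ ×ₗ Fin (Fintype.card α) :=
  toLex (w s(u, x), Fintype.equivFin α x)

lemma childKey_injective (u : α) : Function.Injective (childKey w u) := fun _ _ h =>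
  (Fintype.equivFin α).injective (congrArg (fun k => (ofLex k).2) h)

variable (G r) in
/-- At the root, the value `G.degree r` exceeds every child rank, so that `Nat.succAbove`
skips nothing there. -/
noncomputable def parentEdgeColor (v : α) : ℕ :=
  if h : ∃ u, G.Adj u v ∧ G.dist r u + 1 = G.dist r v then
    (parentEdgeColor h.choose).succAbove
      ((G.children r h.choose).rankAbove (childKey w h.choose) v)
  else G.degree v
termination_by G.dist r v
decreasing_by exact Nat.lt_of_succ_le h.choose_spec.2.le

variable (G r) in
lemma parentEdgeColor_root : G.parentEdgeColor r w r = G.degree r := by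
  rw [parentEdgeColor, dif_neg]
  simp

lemma IsTree.parentEdgeColor_eq (hG : G.IsTree) {u v : α} (hv : v ∈ G.children r u) :
    G.parentEdgeColor r w v =
      (G.parentEdgeColor r w u).succAbove ((G.children r u).rankAbove (childKey w u) v) := by
  obtain ⟨huv, hd⟩ := mem_children.1 hv
  have hex : ∃ u', G.Adj u' v ∧ G.dist r u' + 1 = G.dist r v := ⟨u, huv, hd⟩
  rw [parentEdgeColor, dif_pos hex,
    hG.eq_of_adj_of_dist_add_one hex.choose_spec.1 huv hex.choose_spec.2 hd]

lemma IsTree.card_children_lt_degree (hG : G.IsTree) {u : α} (hu : u ≠ r) :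
    #(G.children r u) < G.degree u := by
  obtain ⟨p, hpu, hd⟩ := hG.exists_adj_dist_add_one r hu
  rw [← card_neighborFinset_eq_degree]
  exact card_lt_card (filter_ssubset.2 ⟨p, (G.mem_neighborFinset u p).2 hpu.symm, by omega⟩)

lemma IsTree.parentEdgeColor_lt_maxDegree (hG : G.IsTree) {u v : α} (hv : v ∈ G.children r u) :
    G.parentEdgeColor r w v < G.maxDegree := by
  have hrank := rankAbove_lt_card _ (childKey w u) hv
  refine lt_of_lt_of_le ?_ (G.degree_le_maxDegree u)
  rw [hG.parentEdgeColor_eq w hv]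
  by_cases hu : u = r
  · subst hu
    have hcard : #(G.children u u) ≤ G.degree u := card_filter_le _ _
    rw [parentEdgeColor_root, Nat.succAbove_of_lt (by omega)]
    omega
  · have := hG.card_children_lt_degree hu
    have := Nat.succAbove_le_succ (G.parentEdgeColor r w u)
      ((G.children r u).rankAbove (childKey w u) v)
    omega

lemma IsTree.parentEdgeColor_ne_of_mem_children (hG : G.IsTree) {u v : α}
    (hv : v ∈ G.children r u) : G.parentEdgeColor r w v ≠ G.parentEdgeColor r w u := by
  rw [hG.parentEdgeColor_eq w hv]
  exact Nat.succAbove_ne _ _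

lemma IsTree.parentEdgeColor_injOn_children (hG : G.IsTree) (u : α) :
    Set.InjOn (G.parentEdgeColor r w) (G.children r u) := by
  intro x hx y hy hxy
  rw [hG.parentEdgeColor_eq w hx, hG.parentEdgeColor_eq w hy] at hxy
  exact rankAbove_injOn _ _ (childKey_injective w u).injOn hx hy
    (Nat.succAbove_right_injective _ hxy)

lemma IsTree.parentEdgeColor_ne (hG : G.IsTree) {u v u' v' x : α} (hv : v ∈ G.children r u)
    (hv' : v' ∈ G.children r u') (hne : s(u, v) ≠ s(u', v')) (hx : x ∈ s(u, v))
    (hx' : x ∈ s(u', v')) : G.parentEdgeColor r w v ≠ G.parentEdgeColor r w v' := by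
  rw [Sym2.mem_iff] at hx hx'
  rcases hx with rfl | rfl <;> rcases hx' with rfl | rfl
  · exact (hG.parentEdgeColor_injOn_children w x).ne hv hv' fun h => hne (by rw [h])
  · exact hG.parentEdgeColor_ne_of_mem_children w hv
  · exact (hG.parentEdgeColor_ne_of_mem_children w hv').symm
  · obtain ⟨hux, hd⟩ := mem_children.1 hv
    obtain ⟨hu'x, hd'⟩ := mem_children.1 hv'
    exact absurd (by rw [hG.eq_of_adj_of_dist_add_one hux hu'x hd hd']) hne

variable (r) in
lemma IsTree.exists_mem_children_of_mem_edgeFinset (hG : G.IsTree) {e : Sym2 α}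
    (he : e ∈ G.edgeFinset) : ∃ u v, v ∈ G.children r u ∧ e = s(u, v) := by
  induction e using Sym2.ind with
  | _ x y =>
    have hxy : G.Adj x y := mem_edgeFinset.1 he
    rcases hG.dist_eq_dist_add_one_of_adj r hxy with h | h
    · exact ⟨y, x, mem_children.2 ⟨hxy.symm, h.symm⟩, Sym2.eq_swap⟩
    · exact ⟨x, y, mem_children.2 ⟨hxy, h.symm⟩, rfl⟩

lemma IsTree.exists_heavy_star (hG : G.IsTree) {u v : α} (hv : v ∈ G.children r u) :
    ∃ D ⊆ G.edgeFinset, G.parentEdgeColor r w v ≤ #D ∧ (∀ f ∈ D, u ∈ f) ∧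
      ∀ f ∈ D, w s(u, v) ≤ w f := by
  classical
  set H := {x ∈ G.children r u | childKey w u v < childKey w u x}
  have hvH : v ∉ H := by simp [H]
  have hmem : ∀ x ∈ insert v H, x ∈ G.children r u ∧ w s(u, v) ≤ w s(u, x) := by
    intro x hx
    rcases mem_insert.1 hx with rfl | hx
    · exact ⟨hv, le_rfl⟩
    · obtain ⟨hx, hlt⟩ := mem_filter.1 hx
      exact ⟨hx, Prod.Lex.monotone_fst _ _ hlt.le⟩
  refine ⟨(insert v H).image (s(u, ·)), ?_, ?_, ?_, ?_⟩
  · intro f hf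
    obtain ⟨x, hx, rfl⟩ := mem_image.1 hf
    exact mem_edgeFinset.2 (mem_children.1 (hmem x hx).1).1
  · rw [card_image_of_injective _ fun _ _ h => Sym2.congr_right.1 h, card_insert_of_notMem hvH,
      hG.parentEdgeColor_eq w hv]
    exact Nat.succAbove_le_succ _ _
  · intro f hf
    obtain ⟨x, -, rfl⟩ := mem_image.1 hf
    exact Sym2.mem_mk_left u x
  · intro f hf
    obtain ⟨x, hx, rfl⟩ := mem_image.1 hf
    exact (hmem x hx).2

variable (G r) in
open Classical in
noncomputable def colorClass (i : ℕ) : Finset (Sym2 α) :=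
  {e ∈ G.edgeFinset | ∃ u v, v ∈ G.children r u ∧ e = s(u, v) ∧ G.parentEdgeColor r w v = i}

open Classical in
lemma mem_colorClass_iff {e : Sym2 α} {i : ℕ} : e ∈ G.colorClass r w i ↔
    e ∈ G.edgeFinset ∧ ∃ u v, v ∈ G.children r u ∧ e = s(u, v) ∧ G.parentEdgeColor r w v = i :=
  mem_filter

lemma colorClass_subset_edgeFinset (i : ℕ) : G.colorClass r w i ⊆ G.edgeFinset :=
  fun _ he => ((mem_colorClass_iff w).1 he).1

lemma mem_colorClass {u v : α} (hv : v ∈ G.children r u) {i : ℕ} :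
    s(u, v) ∈ G.colorClass r w i ↔ G.parentEdgeColor r w v = i := by
  obtain ⟨huv, hd⟩ := mem_children.1 hv
  refine ⟨fun hmem => ?_,
    fun hc => (mem_colorClass_iff w).2 ⟨mem_edgeFinset.2 huv, u, v, hv, rfl, hc⟩⟩
  obtain ⟨-, u', v', hv', heq, hc⟩ := (mem_colorClass_iff w).1 hmem
  have hd' := (mem_children.1 hv').2
  rcases Sym2.eq_iff.1 heq with ⟨rfl, rfl⟩ | ⟨rfl, rfl⟩
  · exact hc
  · omega

end SimpleGraph

open SimpleGraph

/-- Here `i : Fin Δ` is `0`-indexed, so the paper's `i − 1` is `(i : ℕ)`. -/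
theorem stmt_14_general {α : Type*} [Fintype α] [DecidableEq α] (G : SimpleGraph α) [DecidableRel G.Adj]
    (hT : G.IsTree) (w : Sym2 α → ℕ) :
    ∃ M : Fin G.maxDegree → Finset (Sym2 α), IsProperEC G M ∧
      ∀ i : Fin G.maxDegree, ∀ e ∈ M i, ∃ D : Finset (Sym2 α),
        D ⊆ G.edgeFinset ∧ (i : ℕ) ≤ D.card ∧
        (∀ f ∈ D, ∀ g ∈ D, f ≠ g → ∃ v, v ∈ f ∧ v ∈ g) ∧ ∀ f ∈ D, w e ≤ w f := by
  obtain ⟨r⟩ := hT.connected.nonempty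
  refine ⟨fun i => G.colorClass r w i,
    ⟨fun e he => ?_, fun i => colorClass_subset_edgeFinset w i, ?_⟩, ?_⟩
  · obtain ⟨u, v, hv, rfl⟩ := hT.exists_mem_children_of_mem_edgeFinset r he
    refine ⟨⟨_, hT.parentEdgeColor_lt_maxDegree w hv⟩, (mem_colorClass w hv).2 rfl, ?_⟩
    exact fun i hi => Fin.ext ((mem_colorClass w hv).1 hi).symm
  · rintro i e he f hf hne ⟨x, hxe, hxf⟩
    obtain ⟨-, u, v, hv, rfl, hce⟩ := (mem_colorClass_iff w).1 he
    obtain ⟨-, u', v', hv', rfl, hcf⟩ := (mem_colorClass_iff w).1 hf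
    exact hT.parentEdgeColor_ne w hv hv' hne hxe hxf (hce.trans hcf.symm)
  · intro i e he
    obtain ⟨-, u, v, hv, rfl, hc⟩ := (mem_colorClass_iff w).1 he
    obtain ⟨D, hDE, hcard, hstar, hw⟩ := hT.exists_heavy_star w hv
    exact ⟨D, hDE, hc ▸ hcard, fun f hf g hg _ => ⟨u, hstar f hf, hstar g hg⟩, hw⟩

/-- Every weighted tree with at least one edge admits a partition of its edge set into `Δ`
matchings `M i` such that every edge `e ∈ M i` admits at least `i − 1` pairwise adjacent
edges of weight at least `w(e)` (here `i : Fin Δ` is `0`-indexed, so "`i − 1`" is `(i : ℕ)`). -/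
theorem stmt_14 {α : Type*} [Fintype α] [DecidableEq α] (G : SimpleGraph α) [DecidableRel G.Adj]
    (hT : G.IsTree) (w : Sym2 α → ℕ) (hE : G.edgeFinset.Nonempty) :
    ∃ M : Fin G.maxDegree → Finset (Sym2 α), IsProperEC G M ∧
      ∀ i : Fin G.maxDegree, ∀ e ∈ M i, ∃ D : Finset (Sym2 α),
        D ⊆ G.edgeFinset ∧ (i : ℕ) ≤ D.card ∧
        (∀ f ∈ D, ∀ g ∈ D, f ≠ g → ∃ v, v ∈ f ∧ v ∈ g) ∧ ∀ f ∈ D, w e ≤ w f :=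
  stmt_14_general G hT w
end
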